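/- If μ ◁ ν and ν ◁ μ in the strict intersection type system, then μ ∼ ν. -/

import Mathlib

/-!
Typable terms of non-trivial type are head normalizing (reducibility), so for non-trivial `μ`,
`x : μ ⊢ L (R x)` head-reduces to `x`. Following this head reduction (Böhm-out), `L y` reduces
to `y A₁ ⋯ Aₘ`, so `ν ≤ π₁ → ⋯ → πₘ → μ`, hence `ν = ρ₁ → ⋯ → ρₘ → c` with `πᵢ ≤ ρᵢ` and
`c ≤ μ`; and as `R x A₁[R x] ⋯ Aₘ[R x] : c` reduces to `x`, also `μ ≤ c`. So a retraction of a
non-trivial type only adds arguments in front of it: it stays non-trivial, and counting arrows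
in both directions shows that none are added. Trivial types (those equivalent to `ω`) are all
equivalent.
-/

/-- Terms of the λ⊥-calculus (de Bruijn indices). -/
inductive Tm : Type
  | var : ℕ → Tm
  | bot : Tm
  | lam : Tm → Tm
  | app : Tm → Tm → Tm
  deriving DecidableEq

namespace Tm

/-- Lift (shift by one) all de Bruijn indices ≥ k. -/
def lift : Tm → ℕ → Tm
  | var n, k => if n < k then var n else var (n+1)
  | bot, _ => bot
  | lam M, k => lam (lift M (k+1))
  | app M N, k => app (lift M k) (lift N k)

/-- Capture-avoiding substitution of N for variable k. -/
def subst : Tm → ℕ → Tm → Tm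
  | var n, k, N => if n < k then var n else if n = k then N else var (n-1)
  | bot, _, _ => bot
  | lam M, k, N => lam (subst M (k+1) (lift N 0))
  | app M P, k, N => app (subst M k N) (subst P k N)

/-- One-step β⊥-reduction (compatible closure). -/
inductive Step : Tm → Tm → Prop
  | beta (M N : Tm) : Step (app (lam M) N) (subst M 0 N)
  | botApp (N : Tm) : Step (app bot N) bot
  | botLam : Step (lam bot) bot
  | appL {M M'} (N) : Step M M' → Step (app M N) (app M' N)
  | appR (M) {N N'} : Step N N' → Step (app M N) (app M N')
  | lamC {M M'} : Step M M' → Step (lam M) (lam M')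

/-- Multi-step reduction. -/
def Red : Tm → Tm → Prop := Relation.ReflTransGen Step

/-- β⊥-conversion: M = N iff they have a common reduct. -/
def Conv (M N : Tm) : Prop := ∃ P, Red M P ∧ Red N P

/-- The identity combinator I = λx.x. -/
def iTm : Tm := lam (var 0)

/-- Composition M ∘ N = λz.M(Nz). -/
def comp (M N : Tm) : Tm := lam (app (lift M 0) (app (lift N 0) (var 0)))

/-- Apply M to a list of arguments. -/
def applist (M : Tm) (Ms : List Tm) : Tm := Ms.foldl app M

/-- Iterated λ-abstraction. -/
def iterLam : ℕ → Tm → Tm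
  | 0, M => M
  | n+1, M => lam (iterLam n M)

/-- The selector λt x₁ … xₘ. t  (a simple right inverse). -/
def sel (m : ℕ) : Tm := iterLam (m+1) (var m)

/-- Number of initial λ-abstractions of a term. -/
def leadLams : Tm → ℕ
  | lam M => leadLams M + 1
  | _ => 0

end Tm

mutual
/-- Strict intersection types μ ::= φ | ω | σ → μ. -/
inductive STy : Type
  | tvar : ℕ → STy
  | omega : STy
  | arrow : ITy → STy → STy
/-- Intersections σ ::= μ | σ ∧ σ. -/
inductive ITy : Type
  | strict : STy → ITy
  | inter : ITy → ITy → ITy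
end

/-- The subtyping preorder on (strict) intersection types. -/
inductive SubTy : ITy → ITy → Prop
  | refl (σ) : SubTy σ σ
  | trans {σ τ ρ} : SubTy σ τ → SubTy τ ρ → SubTy σ ρ
  | toOmega (σ) : SubTy σ (.strict .omega)
  | omegaArr : SubTy (.strict .omega) (.strict (.arrow (.strict .omega) .omega))
  | interL (σ τ) : SubTy (.inter σ τ) σ
  | interR (σ τ) : SubTy (.inter σ τ) τ
  | interMono {σ₁ σ₂ τ₁ τ₂} : SubTy σ₁ τ₁ → SubTy σ₂ τ₂ → SubTy (.inter σ₁ σ₂) (.inter τ₁ τ₂)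
  | arrow {σ τ : ITy} {μ ν : STy} : SubTy τ σ → SubTy (.strict μ) (.strict ν) →
      SubTy (.strict (.arrow σ μ)) (.strict (.arrow τ ν))

/-- σ ∼ τ : mutual subtyping. -/
def EqvTy (σ τ : ITy) : Prop := SubTy σ τ ∧ SubTy τ σ

/-- μ is a conjunct (component) of the intersection σ. -/
inductive IsComp : STy → ITy → Prop
  | strict (μ) : IsComp μ (.strict μ)
  | left {μ σ} (τ) : IsComp μ σ → IsComp μ (.inter σ τ)
  | right {μ τ} (σ) : IsComp μ τ → IsComp μ (.inter σ τ)

/-- The essential intersection type assignment system (contexts are de Bruijn lists). -/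
inductive Der : List ITy → Tm → STy → Prop
  | var {Γ n σ μ} : Γ[n]? = some σ → IsComp μ σ → Der Γ (.var n) μ
  | omega (Γ M) : Der Γ M .omega
  | sub {Γ M μ ν} : Der Γ M μ → SubTy (.strict μ) (.strict ν) → Der Γ M ν
  | lam {Γ M σ μ} : Der (σ :: Γ) M μ → Der Γ (.lam M) (.arrow σ μ)
  | app {Γ M N σ μ} : Der Γ M (.arrow σ μ) → (∀ ν, IsComp ν σ → Der Γ N ν) →
      Der Γ (.app M N) μ

/-- A strict type is inhabited if some closed term has it. -/
def InhabS (μ : STy) : Prop := ∃ M, Der [] M μ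

/-- An intersection is inhabited if a single closed term has all its conjuncts. -/
def InhabI (σ : ITy) : Prop := ∃ M, ∀ μ, IsComp μ σ → Der [] M μ

/-- σ → ρ is inhabited: one term inhabits σ → μ for every conjunct μ of ρ. -/
def InhabArrow (σ ρ : ITy) : Prop := ∃ M, ∀ μ, IsComp μ ρ → Der [] M (.arrow σ μ)

/-- ρ₁ → … → ρₘ → μ. -/
def arrows (l : List ITy) (μ : STy) : STy := l.foldr .arrow μ

/-- μ ◁ ν : μ is a retract of ν. -/
def Retract (μ ν : STy) : Prop :=
  ∃ L R, Der [] L (.arrow (.strict ν) μ) ∧ Der [] R (.arrow (.strict μ) ν) ∧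
    Tm.Conv (Tm.comp L R) Tm.iTm

/-! ### Substitution -/

namespace Tm

theorem lift_lift (M : Tm) {i j : ℕ} (h : i ≤ j) :
    lift (lift M i) (j + 1) = lift (lift M j) i := by
  induction M generalizing i j with
  | var n => simp only [lift]; split_ifs <;> simp only [lift] <;> split_ifs <;> first | rfl | omega
  | bot => rfl
  | lam M ih => simp only [lift, ih (Nat.succ_le_succ h)]
  | app M N ihM ihN => simp only [lift, ihM h, ihN h]

@[simp]
theorem subst_lift (M N : Tm) (k : ℕ) : subst (lift M k) k N = M := by
  induction M generalizing k N with
  | var n => simp only [lift]; split_ifs <;> simp only [subst] <;> split_ifs <;> first | rfl | omega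
  | bot => rfl
  | lam M ih => simp only [lift, subst, ih]
  | app M P ihM ihP => simp only [lift, subst, ihM, ihP]

theorem lift_subst_of_le (M N : Tm) {i j : ℕ} (h : i ≤ j) :
    lift (subst M j N) i = subst (lift M i) (j + 1) (lift N i) := by
  induction M generalizing i j N with
  | var n =>
    simp only [subst, lift]
    split_ifs <;> simp only [subst, lift] <;> split_ifs <;> first | rfl | omega | (congr 1; omega)
  | bot => rfl
  | lam M ih => simp only [subst, lift, ih _ (Nat.succ_le_succ h), lift_lift N (Nat.zero_le i)]
  | app M P ihM ihP => simp only [subst, lift, ihM _ h, ihP _ h]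

theorem lift_subst_of_ge (M N : Tm) {j k : ℕ} (h : j ≤ k) :
    lift (subst M j N) k = subst (lift M (k + 1)) j (lift N k) := by
  induction M generalizing j k N with
  | var n =>
    simp only [subst, lift]
    split_ifs <;> simp only [subst, lift] <;> split_ifs <;> first | rfl | omega | (congr 1; omega)
  | bot => rfl
  | lam M ih => simp only [subst, lift, ih _ (Nat.succ_le_succ h), lift_lift N (Nat.zero_le k)]
  | app M P ihM ihP => simp only [subst, lift, ihM _ h, ihP _ h]

theorem subst_subst (M N P : Tm) {i j : ℕ} (h : i ≤ j) :
    subst (subst M i N) j P = subst (subst M (j + 1) (lift P i)) i (subst N j P) := by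
  induction M generalizing i j N P with
  | var n =>
    simp only [subst]
    split_ifs <;> simp only [subst, subst_lift] <;> (try split_ifs) <;>
      first | rfl | omega
  | bot => rfl
  | lam M ih =>
    simp only [subst, ih _ _ (Nat.succ_le_succ h), lift_lift P (Nat.zero_le i),
      lift_subst_of_le N P (Nat.zero_le j)]
  | app M Q ihM ihQ => simp only [subst, ihM _ _ h, ihQ _ _ h]

def NotFree : ℕ → Tm → Prop
  | j, var n => n ≠ j
  | _, bot => True
  | j, lam M => NotFree (j + 1) M
  | j, app M N => NotFree j M ∧ NotFree j N

theorem notFree_lift_self (M : Tm) (k : ℕ) : NotFree k (lift M k) := by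
  induction M generalizing k with
  | var n => simp only [lift]; split_ifs <;> simp only [NotFree] <;> omega
  | bot => trivial
  | lam M ih => exact ih (k + 1)
  | app M N ihM ihN => exact ⟨ihM k, ihN k⟩

theorem NotFree.lift {M : Tm} {j k : ℕ} (hk : k ≤ j) (h : NotFree j M) :
    NotFree (j + 1) (lift M k) := by
  induction M generalizing j k with
  | var n => simp only [Tm.lift]; split_ifs <;> simp only [NotFree] at * <;> omega
  | bot => trivial
  | lam M ih => exact ih (Nat.succ_le_succ hk) h
  | app M N ihM ihN => exact ⟨ihM hk h.1, ihN hk h.2⟩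

theorem NotFree.subst {M A : Tm} {i j : ℕ} (hij : i ≤ j) (hM : NotFree (j + 1) M)
    (hA : NotFree j A) : NotFree j (subst M i A) := by
  induction M generalizing A i j with
  | var n => simp only [Tm.subst]; split_ifs <;> simp only [NotFree] at * <;> omega
  | bot => trivial
  | lam M ih => exact ih (Nat.succ_le_succ hij) hM (hA.lift (Nat.zero_le j))
  | app M N ihM ihN => exact ⟨ihM hij hM.1 hA, ihN hij hM.2 hA⟩

theorem Red.app_left {M M' : Tm} (N : Tm) (h : Red M M') : Red (app M N) (app M' N) :=
  Relation.ReflTransGen.lift (app · N) (fun _ _ => Step.appL N) _ _ h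

theorem Red.app_right (M : Tm) {N N' : Tm} (h : Red N N') : Red (app M N) (app M N') :=
  Relation.ReflTransGen.lift (app M) (fun _ _ => Step.appR M) _ _ h

theorem Red.lam {M M' : Tm} (h : Red M M') : Red (lam M) (lam M') :=
  Relation.ReflTransGen.lift Tm.lam (fun _ _ => Step.lamC) _ _ h

theorem Red.app {M M' N N' : Tm} (hM : Red M M') (hN : Red N N') : Red (app M N) (app M' N') :=
  (hM.app_left N).trans (hN.app_right M')

theorem red_var_eq {n : ℕ} {Z : Tm} (h : Red (var n) Z) : Z = var n := by
  induction h with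
  | refl => rfl
  | tail _ hs ih => subst ih; cases hs

theorem red_lam_inv {M Z : Tm} (h : Red (lam M) Z) : (∃ M', Z = lam M' ∧ Red M M') ∨ Z = bot := by
  induction h with
  | refl => exact Or.inl ⟨M, rfl, .refl⟩
  | tail _ hs ih =>
    rcases ih with ⟨M', rfl, hM⟩ | rfl
    · cases hs with
      | botLam => exact Or.inr rfl
      | lamC h => exact Or.inl ⟨_, rfl, hM.tail h⟩
    · cases hs

theorem not_red_lam_var {M : Tm} {n : ℕ} : ¬ Red (lam M) (var n) := fun h => by
  rcases red_lam_inv h with ⟨_, h, _⟩ | h <;> cases h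

/-! ### Confluence -/

/-- Parallel reduction. Confluence follows from the triangle property `Par.cd` of the complete
development `cd` (Takahashi). -/
inductive Par : Tm → Tm → Prop
  | var (n) : Par (var n) (var n)
  | bot : Par bot bot
  | lam {M M'} : Par M M' → Par (lam M) (lam M')
  | app {M M' N N'} : Par M M' → Par N N' → Par (app M N) (app M' N')
  | beta {M M' N N'} : Par M M' → Par N N' → Par (app (lam M) N) (subst M' 0 N')
  | botApp (N) : Par (app bot N) bot
  | botLam : Par (lam bot) bot

theorem Par.refl (M : Tm) : Par M M := by
  induction M with
  | var n => exact .var n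
  | bot => exact .bot
  | lam M ih => exact .lam ih
  | app M N ihM ihN => exact .app ihM ihN

theorem Step.par {M N : Tm} (h : Step M N) : Par M N := by
  induction h with
  | beta M N => exact .beta (.refl M) (.refl N)
  | botApp N => exact .botApp N
  | botLam => exact .botLam
  | appL N _ ih => exact .app ih (.refl N)
  | appR M _ ih => exact .app (.refl M) ih
  | lamC _ ih => exact .lam ih

theorem Par.red {M N : Tm} (h : Par M N) : Red M N := by
  induction h with
  | var | bot => exact .refl
  | lam _ ih => exact ih.lam
  | app _ _ ihM ihN => exact ihM.app ihN
  | beta _ _ ihM ihN => exact (ihM.lam.app ihN).tail (Step.beta _ _)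
  | botApp N => exact .single (Step.botApp N)
  | botLam => exact .single Step.botLam

theorem Par.lift {M M' : Tm} (h : Par M M') (k : ℕ) : Par (lift M k) (lift M' k) := by
  induction h generalizing k with
  | var n => exact .refl _
  | bot => exact .bot
  | lam _ ih => exact .lam (ih (k + 1))
  | app _ _ ihM ihN => exact .app (ihM k) (ihN k)
  | beta _ _ ihM ihN =>
    rw [lift_subst_of_ge _ _ (Nat.zero_le k)]
    exact .beta (ihM (k + 1)) (ihN k)
  | botApp N => exact .botApp _
  | botLam => exact .botLam

theorem Par.subst {M M' N N' : Tm} (hM : Par M M') (hN : Par N N') (k : ℕ) :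
    Par (subst M k N) (subst M' k N') := by
  induction hM generalizing N N' k with
  | var n => simp only [Tm.subst]; split_ifs <;> first | exact .refl _ | exact hN
  | bot => exact .bot
  | lam _ ih => exact .lam (ih (hN.lift 0) (k + 1))
  | app _ _ ihM ihN => exact .app (ihM hN k) (ihN hN k)
  | beta _ _ ihP ihQ =>
    rw [subst_subst _ _ _ (Nat.zero_le k)]
    exact .beta (ihP (hN.lift 0) (k + 1)) (ihQ hN k)
  | botApp => exact .botApp _
  | botLam => exact .botLam

def cd : Tm → Tm
  | var n => var n
  | bot => bot
  | lam bot => bot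
  | lam (var n) => lam (var n)
  | lam (lam M) => lam (cd (lam M))
  | lam (app M N) => lam (cd (app M N))
  | app (lam P) N => subst (cd P) 0 (cd N)
  | app bot _ => bot
  | app (var n) N => app (var n) (cd N)
  | app (app P Q) N => app (cd (app P Q)) (cd N)

theorem Par.cd {M N : Tm} (h : Par M N) : Par N (cd M) := by
  induction h with
  | var n => exact .var n
  | bot => exact .bot
  | @lam A A' h ih =>
    cases A with
    | bot => cases h; exact .botLam
    | var n => cases h; exact .refl _
    | lam | app => exact .lam ih
  | @app A A' B B' hA _ ihA ihB =>
    cases A with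
    | bot => cases hA; exact .botApp _
    | var n => cases hA; exact .app (.refl _) ihB
    | lam P =>
      cases hA with
      | botLam => exact .botApp _
      | lam hP =>
        cases P with
        | bot => cases hP; exact .beta .bot ihB
        | var n => cases hP; exact .beta (.refl _) ihB
        | lam | app => cases ihA with | lam h => exact .beta h ihB
    | app => exact .app ihA ihB
  | beta _ _ ihP ihQ => exact ihP.subst ihQ 0
  | botApp | botLam => exact .bot

theorem red_confluent {M N₁ N₂ : Tm} (h₁ : Red M N₁) (h₂ : Red M N₂) :
    ∃ P, Red N₁ P ∧ Red N₂ P := by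
  have red_iff : ∀ {A B}, Red A B ↔ Relation.ReflTransGen Par A B := fun {A B} =>
    ⟨Relation.ReflTransGen.mono (fun _ _ => Step.par) A B,
      Relation.ReflTransGen.lift' id (fun _ _ => Par.red) A B⟩
  obtain ⟨P, hP₁, hP₂⟩ := Relation.church_rosser
    (fun M _ _ h₁ h₂ => ⟨cd M, .single h₁.cd, .single h₂.cd⟩) (red_iff.1 h₁) (red_iff.1 h₂)
  exact ⟨P, red_iff.2 hP₁, red_iff.2 hP₂⟩

theorem applist_concat (M N : Tm) (Ns : List Tm) :
    applist M (Ns ++ [N]) = app (applist M Ns) N := by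
  simp [applist, List.foldl_append]

theorem subst_applist (M N : Tm) (Ns : List Tm) (k : ℕ) :
    subst (applist M Ns) k N = applist (subst M k N) (Ns.map (subst · k N)) := by
  induction Ns generalizing M with
  | nil => rfl
  | cons P Ns ih => exact ih (app M P)

theorem applist_eq_var {M : Tm} {Ns : List Tm} {n : ℕ} (h : applist M Ns = var n) :
    M = var n ∧ Ns = [] := by
  induction Ns using List.reverseRecOn with
  | nil => exact ⟨h, rfl⟩
  | append_singleton Ns N _ => rw [applist_concat] at h; cases h

theorem Step.notFree {M M' : Tm} (h : Step M M') {j : ℕ} (hM : NotFree j M) : NotFree j M' := by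
  induction h generalizing j with
  | beta => exact hM.1.subst (Nat.zero_le j) hM.2
  | botApp | botLam => trivial
  | appL _ _ ih => exact ⟨ih hM.1, hM.2⟩
  | appR _ _ ih => exact ⟨hM.1, ih hM.2⟩
  | lamC _ ih => exact ih hM

/-! ### Head reduction -/

inductive HStep : Tm → Tm → Prop
  | beta (M N) : HStep (app (lam M) N) (subst M 0 N)
  | botApp (N) : HStep (app bot N) bot
  | botLam : HStep (lam bot) bot
  | appL {M M'} (N) : HStep M M' → (∀ P, M ≠ lam P) → HStep (app M N) (app M' N)
  | lamC {M M'} : HStep M M' → HStep (lam M) (lam M')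

def HRed : Tm → Tm → Prop := Relation.ReflTransGen HStep

theorem HStep.step {M N : Tm} (h : HStep M N) : Step M N := by
  induction h with
  | beta M N => exact .beta M N
  | botApp N => exact .botApp N
  | botLam => exact .botLam
  | appL N _ _ ih => exact .appL N ih
  | lamC _ ih => exact .lamC ih

theorem HRed.red {M N : Tm} (h : HRed M N) : Red M N :=
  Relation.ReflTransGen.mono (fun _ _ => HStep.step) M N h

theorem HStep.det {M Z₁ Z₂ : Tm} (h₁ : HStep M Z₁) (h₂ : HStep M Z₂) : Z₁ = Z₂ := by
  induction h₁ generalizing Z₂ with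
  | beta M N => cases h₂ with
    | beta => rfl
    | appL _ _ hM => exact absurd rfl (hM M)
  | botApp N => cases h₂ with
    | botApp => rfl
    | appL _ h => cases h
  | botLam => cases h₂ with
    | botLam => rfl
    | lamC h => cases h
  | appL N h hM ih => cases h₂ with
    | beta P => exact absurd rfl (hM P)
    | botApp => cases h
    | appL _ h' => rw [ih h']
  | lamC h ih => cases h₂ with
    | botLam => cases h
    | lamC h' => rw [ih h']

theorem HStep.subst {M M' : Tm} (h : HStep M M') (k : ℕ) (N : Tm) :
    HStep (subst M k N) (subst M' k N) := by
  induction h generalizing k N with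
  | beta P Q => rw [subst_subst P Q N (Nat.zero_le k)]; exact .beta _ _
  | botApp => exact .botApp _
  | botLam => exact .botLam
  | appL Q h hM ih =>
    refine .appL _ (ih k N) ?_
    cases h with
    | lamC => exact absurd rfl (hM _)
    | botLam => exact absurd rfl (hM _)
    | _ => intro P hP; cases hP
  | lamC _ ih => exact .lamC (ih (k + 1) (lift N 0))

inductive Neutral : Tm → Prop
  | var (n) : Neutral (var n)
  | app {M} (N) : Neutral M → Neutral (app M N)

inductive Hnf : Tm → Prop
  | neutral {M} : Neutral M → Hnf M
  | lam {M} : Hnf M → Hnf (lam M)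

def HasHnf (M : Tm) : Prop := ∃ W, HRed M W ∧ Hnf W

theorem neutral_applist (n : ℕ) (Ns : List Tm) : Neutral (applist (var n) Ns) := by
  induction Ns using List.reverseRecOn with
  | nil => exact .var n
  | append_singleton Ns N ih => rw [applist_concat]; exact ih.app N

theorem Neutral.eq_applist {M : Tm} (h : Neutral M) : ∃ n Ns, M = Tm.applist (Tm.var n) Ns := by
  induction h with
  | var n => exact ⟨n, [], rfl⟩
  | app N _ ih =>
    obtain ⟨n, Ns, rfl⟩ := ih
    exact ⟨n, Ns ++ [N], (applist_concat _ _ _).symm⟩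

theorem Neutral.not_hstep {M Z : Tm} (h : Neutral M) : ¬ HStep M Z := by
  induction h generalizing Z with
  | var => nofun
  | app N h ih => intro hs; cases hs with
    | beta | botApp => cases h
    | appL _ hs => exact ih hs

theorem Hnf.not_hstep {M Z : Tm} (h : Hnf M) : ¬ HStep M Z := by
  induction h generalizing Z with
  | neutral h => exact h.not_hstep
  | lam h ih => intro hs; cases hs with
    | botLam => cases h with | neutral h => cases h
    | lamC hs => exact ih hs

theorem hstep_or_eq_bot_or_hnf (M : Tm) : (∃ M', HStep M M') ∨ M = bot ∨ Hnf M := by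
  induction M with
  | var n => exact .inr (.inr (.neutral (.var n)))
  | bot => exact .inr (.inl rfl)
  | lam P ih =>
    rcases ih with ⟨P', h⟩ | rfl | h
    · exact .inl ⟨_, .lamC h⟩
    · exact .inl ⟨_, .botLam⟩
    · exact .inr (.inr h.lam)
  | app A B ihA _ =>
    cases A with
    | lam P => exact .inl ⟨_, .beta P B⟩
    | bot => exact .inl ⟨_, .botApp B⟩
    | _ =>
      rcases ihA with ⟨A', h⟩ | h | h
      · exact .inl ⟨_, .appL B h (fun _ => nofun)⟩
      · cases h
      · cases h with
        | neutral h => exact .inr (.inr (.neutral (h.app B)))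

theorem HRed.eq_of_not_hstep {M W : Tm} (h : HRed M W) (hM : ∀ Z, ¬ HStep M Z) : W = M := by
  rcases Relation.ReflTransGen.cases_head h with rfl | ⟨Z, hs, _⟩
  · rfl
  · exact absurd hs (hM Z)

theorem HasHnf.of_hstep {M M' : Tm} (hs : HStep M M') : HasHnf M' → HasHnf M
  | ⟨W, hW, hnf⟩ => ⟨W, .head hs hW, hnf⟩

theorem HasHnf.hstep {M M' : Tm} (hs : HStep M M') : HasHnf M → HasHnf M'
  | ⟨W, hW, hnf⟩ => by
    rcases Relation.ReflTransGen.cases_head hW with rfl | ⟨Z, hs', hZ⟩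
    · exact absurd hs hnf.not_hstep
    · exact ⟨W, hs.det hs' ▸ hZ, hnf⟩

theorem HasHnf.lam {M : Tm} : HasHnf M → HasHnf (lam M)
  | ⟨W, hW, hnf⟩ =>
    ⟨Tm.lam W, Relation.ReflTransGen.lift Tm.lam (fun _ _ => HStep.lamC) _ _ hW, hnf.lam⟩

theorem not_hasHnf_bot : ¬ HasHnf bot := fun ⟨W, hW, hnf⟩ => by
  rw [hW.eq_of_not_hstep nofun] at hnf
  cases hnf with | neutral h => cases h

theorem HasHnf.of_subst {M N : Tm} {j : ℕ} (h : HasHnf (subst M j N)) : HasHnf M := by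
  obtain ⟨W, hW, hnf⟩ := h
  generalize hS : subst M j N = S at hW
  induction hW using Relation.ReflTransGen.head_induction_on generalizing M with
  | refl =>
    rcases hstep_or_eq_bot_or_hnf M with ⟨M', hs⟩ | rfl | hM
    · exact absurd (hS ▸ hs.subst j N) hnf.not_hstep
    · subst hS; cases hnf with | neutral h => cases h
    · exact ⟨M, .refl, hM⟩
  | head hs _ ih =>
    rcases hstep_or_eq_bot_or_hnf M with ⟨M', hs'⟩ | rfl | hM
    · subst hS
      exact .of_hstep hs' (ih ((hs'.subst j N).det hs))
    · subst hS; cases hs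
    · exact ⟨M, .refl, hM⟩

theorem HasHnf.of_app {M N : Tm} (h : HasHnf (app M N)) : HasHnf M := by
  obtain ⟨W, hW, hnf⟩ := h
  generalize hS : app M N = S at hW
  induction hW using Relation.ReflTransGen.head_induction_on generalizing M with
  | refl =>
    subst hS
    cases hnf with | neutral h => cases h with | app _ h => exact ⟨M, .refl, .neutral h⟩
  | head hs hW ih =>
    subst hS
    cases hs with
    | beta P => exact (HasHnf.of_subst ⟨W, hW, hnf⟩).lam
    | botApp => exact absurd ⟨W, hW, hnf⟩ not_hasHnf_bot
    | appL _ hs => exact .of_hstep hs (ih rfl)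

theorem hasHnf_iff_of_hRed {M M' : Tm} (h : HRed M M') : HasHnf M ↔ HasHnf M' := by
  induction h with
  | refl => rfl
  | tail _ hs ih => exact ih.trans ⟨.hstep hs, .of_hstep hs⟩

theorem HStep.app_join {M M' : Tm} (h : HStep M M') (N : Tm) :
    ∃ Z, HRed (app M N) Z ∧ HRed (app M' N) Z := by
  by_cases hM : ∃ P, M = lam P
  · obtain ⟨P, rfl⟩ := hM
    cases h with
    | botLam => exact ⟨bot, .single (.beta bot N), .single (.botApp N)⟩
    | @lamC _ P' h =>
      exact ⟨Tm.subst P' 0 N, .head (.beta P N) (.single (h.subst 0 N)), .single (.beta P' N)⟩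
  · push Not at hM
    exact ⟨app M' N, .single (.appL N h hM), .refl⟩

theorem Neutral.step {M M' : Tm} (h : Neutral M) (hs : Step M M') :
    Neutral M' ∧ ∀ n, M' ≠ Tm.var n := by
  induction h generalizing M' with
  | var => cases hs
  | app N h ih =>
    cases hs with
    | beta | botApp => cases h
    | appL _ hs => exact ⟨(ih hs).1.app N, fun _ => nofun⟩
    | appR _ _ => exact ⟨h.app _, fun _ => nofun⟩

theorem Neutral.eq_of_red_var {M : Tm} {n : ℕ} (h : Neutral M) (hM : Red M (Tm.var n)) :
    M = Tm.var n := by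
  induction hM using Relation.ReflTransGen.head_induction_on with
  | refl => rfl
  | head hs _ ih => exact absurd (ih (h.step hs).1) ((h.step hs).2 n)

theorem HasHnf.hRed_of_red_var {M : Tm} {n : ℕ} (h : HasHnf M) (hM : Red M (var n)) :
    HRed M (var n) := by
  obtain ⟨W, hMW, hW⟩ := h
  obtain ⟨P, hWP, hnP⟩ := red_confluent hMW.red hM
  rw [red_var_eq hnP] at hWP
  cases hW with
  | neutral hW => exact hW.eq_of_red_var hWP ▸ hMW
  | lam => exact absurd hWP not_red_lam_var

theorem NotFree.of_applist {M : Tm} {Ns : List Tm} {j : ℕ} (h : NotFree j (applist M Ns)) :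
    NotFree j M := by
  induction Ns generalizing M with
  | nil => exact h
  | cons N Ns ih => exact (ih h).1

theorem exists_red_applist_of_stuck {M B : Tm} (hM : NotFree 1 M) (hstuck : M = bot ∨ Hnf M)
    (h : HRed (subst M 0 B) (var 0)) :
    ∃ As, Red M (applist (var 0) As) ∧ HRed (applist B (As.map (subst · 0 B))) (var 0) := by
  rcases hstuck with rfl | hnf
  · cases h.eq_of_not_hstep nofun
  cases hnf with
  | lam => exact absurd h.red not_red_lam_var
  | neutral hnf =>
    obtain ⟨n, As, rfl⟩ := hnf.eq_applist
    rw [subst_applist] at h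
    match n, hM with
    | 0, _ => exact ⟨As, .refl, h⟩
    | 1, hM => exact absurd rfl hM.of_applist
    | m + 2, _ =>
      have := h.eq_of_not_hstep fun _ => (neutral_applist (m + 1) _).not_hstep
      cases (applist_eq_var this.symm).1

/-- Böhm-out. `var 0` is `y` in `M` and `x` in `M[y := B]`; as `x` (`var 1` in `M`) does not
occur in `M`, the head variable `x` can only come from `B`. -/
theorem exists_red_applist_of_hRed_subst {M B : Tm} (hM : NotFree 1 M)
    (h : HRed (subst M 0 B) (var 0)) :
    ∃ As, Red M (applist (var 0) As) ∧ HRed (applist B (As.map (subst · 0 B))) (var 0) := by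
  generalize hS : subst M 0 B = S at h
  induction h using Relation.ReflTransGen.head_induction_on generalizing M with
  | refl =>
    rcases hstep_or_eq_bot_or_hnf M with ⟨M', hs⟩ | hstuck
    · exact absurd (hS ▸ hs.subst 0 B) (Neutral.var 0).not_hstep
    · exact exists_red_applist_of_stuck hM hstuck (hS ▸ .refl)
  | head hs hS' ih =>
    subst hS
    rcases hstep_or_eq_bot_or_hnf M with ⟨M', hs'⟩ | hstuck
    · obtain ⟨As, hred, hB⟩ := ih (hs'.step.notFree hM) ((hs'.subst 0 B).det hs)
      exact ⟨As, .head hs'.step hred, hB⟩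
    · exact exists_red_applist_of_stuck hM hstuck (.head hs hS')

end Tm

/-! ### Subtyping -/

namespace STy

@[elab_as_elim]
theorem arrow_induction {motive : STy → Prop} (tvar : ∀ n, motive (.tvar n)) (omega : motive .omega)
    (arrow : ∀ σ μ, motive μ → motive (.arrow σ μ)) : ∀ μ, motive μ
  | .tvar n => tvar n
  | .omega => omega
  | .arrow σ μ => arrow σ μ (arrow_induction tvar omega arrow μ)

/-- The types `σ₁ → ⋯ → σₖ → ω`, i.e. those equivalent to `ω`. -/
def IsTrivial : STy → Prop
  | .omega => True
  | .tvar _ => False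
  | .arrow _ μ => IsTrivial μ

theorem isTrivial_omega : omega.IsTrivial := trivial

def arity : STy → ℕ
  | .arrow _ μ => arity μ + 1
  | _ => 0

theorem isTrivial_arrows (ρs : List ITy) (μ : STy) : (arrows ρs μ).IsTrivial ↔ μ.IsTrivial := by
  induction ρs with
  | nil => rfl
  | cons _ _ ih => exact ih

theorem arity_arrows (ρs : List ITy) (μ : STy) : (arrows ρs μ).arity = μ.arity + ρs.length := by
  induction ρs with
  | nil => rfl
  | cons _ _ ih => simp only [arrows, List.foldr_cons, arity, List.length_cons] at ih ⊢; omega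

end STy

open STy

theorem isComp_strict_iff {μ ν : STy} : IsComp μ (.strict ν) ↔ μ = ν :=
  ⟨fun h => by cases h; rfl, fun h => h ▸ .strict μ⟩

theorem forall_isComp_strict {P : STy → Prop} {ν : STy} :
    (∀ μ, IsComp μ (.strict ν) → P μ) ↔ P ν :=
  ⟨fun h => h ν (.strict ν), fun h _ hμ => isComp_strict_iff.1 hμ ▸ h⟩

theorem sizeOf_lt_of_isComp {μ : STy} {σ : ITy} (h : IsComp μ σ) : sizeOf μ < sizeOf σ := by
  induction h with
  | strict => simp
  | left => simp; omega
  | right => simp; omega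

/-- A syntax-directed form of `σ ≤ μ`; see `subTy_strict_iff`. -/
def AlgSub : ITy → STy → Prop
  | _, .omega => True
  | σ, .tvar n => IsComp (.tvar n) σ
  | σ, .arrow τ μ =>
    μ.IsTrivial ∨ ∃ τ' μ', IsComp (.arrow τ' μ') σ ∧ SubTy τ τ' ∧ AlgSub (.strict μ') μ

namespace AlgSub

theorem mono {σ σ' : ITy} (hσ : ∀ ν, IsComp ν σ → IsComp ν σ') {μ : STy} (h : AlgSub σ μ) :
    AlgSub σ' μ := by
  induction μ using arrow_induction with
  | tvar => exact hσ _ h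
  | omega => trivial
  | arrow => exact h.imp_right fun ⟨τ', μ', hc, hs, hq⟩ => ⟨τ', μ', hσ _ hc, hs, hq⟩

theorem of_isComp {μ : STy} {σ : ITy} (h : IsComp μ σ) : AlgSub σ μ := by
  induction μ using arrow_induction generalizing σ with
  | tvar => exact h
  | omega => trivial
  | arrow τ μ ih => exact .inr ⟨τ, μ, h, .refl τ, ih (.strict μ)⟩

theorem isTrivial {σ : ITy} (hσ : ∀ ν, IsComp ν σ → ν.IsTrivial) {μ : STy} (h : AlgSub σ μ) :
    μ.IsTrivial := by
  induction μ using arrow_induction generalizing σ with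
  | tvar => exact hσ _ h
  | omega => trivial
  | arrow τ μ ih =>
    rcases h with h | ⟨τ', μ', hc, -, hq⟩
    · exact h
    · exact ih (forall_isComp_strict.2 (show μ'.IsTrivial from hσ (.arrow τ' μ') hc)) hq

theorem trans {σ τ : ITy} (hστ : ∀ ν, IsComp ν τ → AlgSub σ ν) {μ : STy} (h : AlgSub τ μ) :
    AlgSub σ μ := by
  induction μ using arrow_induction generalizing σ τ with
  | tvar => exact hστ _ h
  | omega => trivial
  | arrow ρ μ ih =>
    rcases h with h | ⟨τ', μ', hc, hs, hq⟩
    · exact .inl h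
    rcases hστ _ hc with h' | ⟨τ'', μ'', hc', hs', hq'⟩
    · exact .inl (isTrivial (forall_isComp_strict.2 h') hq)
    · exact .inr ⟨τ'', μ'', hc', hs.trans hs', ih (forall_isComp_strict.2 hq') hq⟩

end AlgSub

theorem SubTy.algSub {σ τ : ITy} (h : SubTy σ τ) {μ : STy} (hμ : IsComp μ τ) : AlgSub σ μ := by
  induction h generalizing μ with
  | refl => exact .of_isComp hμ
  | trans _ _ ih₁ ih₂ => exact .trans (fun _ => ih₁) (ih₂ hμ)
  | toOmega => rw [isComp_strict_iff.1 hμ]; trivial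
  | omegaArr => rw [isComp_strict_iff.1 hμ]; exact .inl trivial
  | interL _ τ => exact .of_isComp (.left τ hμ)
  | interR σ _ => exact .of_isComp (.right σ hμ)
  | interMono _ _ ih₁ ih₂ =>
    cases hμ with
    | left _ h => exact (ih₁ h).mono fun _ => .left _
    | right _ h => exact (ih₂ h).mono fun _ => .right _
  | @arrow σ _ ν _ h _ _ ih =>
    rw [isComp_strict_iff.1 hμ]
    exact .inr ⟨σ, ν, .strict _, h, ih (.strict _)⟩

theorem SubTy.of_isComp {μ : STy} {σ : ITy} (h : IsComp μ σ) : SubTy σ (.strict μ) := by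
  induction h with
  | strict => exact .refl _
  | left τ _ ih => exact (interL _ τ).trans ih
  | right σ _ ih => exact (interR σ _).trans ih

theorem STy.IsTrivial.omega_subTy {μ : STy} (h : μ.IsTrivial) :
    SubTy (.strict .omega) (.strict μ) := by
  induction μ using arrow_induction with
  | tvar => cases h
  | omega => exact .refl _
  | arrow σ μ ih => exact SubTy.omegaArr.trans (.arrow (.toOmega σ) (ih h))

theorem STy.IsTrivial.subTy {μ : STy} (h : μ.IsTrivial) (σ : ITy) : SubTy σ (.strict μ) :=
  (SubTy.toOmega σ).trans h.omega_subTy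

theorem AlgSub.subTy {σ : ITy} {μ : STy} (h : AlgSub σ μ) : SubTy σ (.strict μ) := by
  induction μ using arrow_induction generalizing σ with
  | tvar => exact .of_isComp h
  | omega => exact .toOmega σ
  | arrow τ μ ih =>
    rcases h with h | ⟨τ', μ', hc, hs, hq⟩
    · exact IsTrivial.subTy (μ := .arrow τ μ) h σ
    · exact (SubTy.of_isComp hc).trans (.arrow hs (ih hq))

theorem subTy_strict_iff {σ : ITy} {μ : STy} : SubTy σ (.strict μ) ↔ AlgSub σ μ :=
  ⟨fun h => h.algSub (.strict μ), AlgSub.subTy⟩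

theorem AlgSub.isTrivial_of_omega {μ : STy} (h : AlgSub (.strict .omega) μ) : μ.IsTrivial :=
  h.isTrivial (forall_isComp_strict.2 isTrivial_omega)

theorem STy.IsTrivial.of_subTy {μ ν : STy} (h : SubTy (.strict μ) (.strict ν)) (hμ : μ.IsTrivial) :
    ν.IsTrivial :=
  (subTy_strict_iff.1 (hμ.omega_subTy.trans h)).isTrivial_of_omega

theorem arity_eq_of_algSub {μ ν : STy} (h : AlgSub (.strict μ) ν) (h' : AlgSub (.strict ν) μ)
    (hμ : ¬ μ.IsTrivial) : μ.arity = ν.arity := by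
  induction ν using arrow_induction generalizing μ with
  | tvar => rw [isComp_strict_iff.1 h]
  | omega => exact absurd h'.isTrivial_of_omega hμ
  | arrow τ ν ih =>
    rcases h with h | ⟨τ', μ', hc, -, hq⟩
    · exact absurd (h'.isTrivial (forall_isComp_strict.2 (show (arrow τ ν).IsTrivial from h))) hμ
    cases isComp_strict_iff.1 hc
    rcases h' with h' | ⟨_, _, hc', -, hq'⟩
    · exact absurd h' hμ
    cases isComp_strict_iff.1 hc'
    exact congrArg (· + 1) (ih hq hq' hμ)

/-! ### Typing -/

theorem List.getElem?_append_cons_of_le {α : Type*} (l₁ l₂ : List α) (a : α) {n : ℕ}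
    (h : l₁.length ≤ n) : (l₁ ++ a :: l₂)[n + 1]? = (l₁ ++ l₂)[n]? := by
  rw [List.getElem?_append_right (by omega), List.getElem?_append_right h,
    Nat.sub_add_comm h, List.getElem?_cons_succ]

def CtxLe (Γ' Γ : List ITy) : Prop :=
  ∀ (n : ℕ) (σ : ITy), Γ[n]? = some σ → ∃ σ', Γ'[n]? = some σ' ∧ SubTy σ' σ

theorem CtxLe.refl (Γ : List ITy) : CtxLe Γ Γ := fun _ σ h => ⟨σ, h, .refl σ⟩

theorem CtxLe.cons {Γ' Γ : List ITy} (h : CtxLe Γ' Γ) {σ' σ : ITy} (hσ : SubTy σ' σ) :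
    CtxLe (σ' :: Γ') (σ :: Γ) := by
  rintro (_ | n) τ hτ
  · cases hτ; exact ⟨σ', rfl, hσ⟩
  · exact h n τ hτ

namespace Der

variable {Γ : List ITy} {M : Tm}

theorem of_isTrivial {μ : STy} (h : μ.IsTrivial) : Der Γ M μ :=
  .sub (.omega Γ M) h.omega_subTy

theorem of_algSub {σ : ITy} {μ : STy} (h : AlgSub σ μ) (hM : ∀ ν, IsComp ν σ → Der Γ M ν) :
    Der Γ M μ := by
  match μ, h with
  | .omega, _ => exact .omega Γ M
  | .tvar _, h => exact hM _ h
  | .arrow _ _, .inl h => exact of_isTrivial h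
  | .arrow _ _, .inr ⟨τ', μ', hc, hs, hq⟩ =>
    exact .sub (hM _ hc) (AlgSub.subTy (.inr ⟨τ', μ', .strict _, hs, hq⟩))

theorem mono_ctx {Γ' : List ITy} {μ : STy} (h : Der Γ M μ) (hΓ : CtxLe Γ' Γ) : Der Γ' M μ := by
  induction h generalizing Γ' with
  | var hn hc =>
    obtain ⟨σ', hn', hs⟩ := hΓ _ _ hn
    exact of_algSub (hs.algSub hc) fun _ => .var hn'
  | omega => exact .omega _ _
  | sub _ hs ih => exact .sub (ih hΓ) hs
  | lam _ ih => exact .lam (ih (hΓ.cons (.refl _)))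
  | app _ _ ihM ihN => exact .app (ihM hΓ) fun ν hν => ihN ν hν hΓ

theorem var_inv {n : ℕ} {μ : STy} (h : Der Γ (.var n) μ) :
    μ.IsTrivial ∨ ∃ σ, Γ[n]? = some σ ∧ AlgSub σ μ := by
  generalize hM : Tm.var n = M at h
  induction h with
  | var hn hc => cases hM; exact .inr ⟨_, hn, .of_isComp hc⟩
  | omega => exact .inl trivial
  | sub _ hs ih =>
    rcases ih hM with h | ⟨σ, hn, hq⟩
    · exact .inl (h.of_subTy hs)
    · exact .inr ⟨σ, hn, .trans (forall_isComp_strict.2 hq) (subTy_strict_iff.1 hs)⟩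
  | lam | app => cases hM

theorem bot_inv {μ : STy} (h : Der Γ .bot μ) : μ.IsTrivial := by
  generalize hM : Tm.bot = M at h
  induction h with
  | omega => trivial
  | sub _ hs ih => exact (ih hM).of_subTy hs
  | var | lam | app => cases hM

theorem lam_inv {P : Tm} {μ : STy} (h : Der Γ (.lam P) μ) :
    μ.IsTrivial ∨ ∃ σ ν, μ = .arrow σ ν ∧ Der (σ :: Γ) P ν := by
  generalize hM : Tm.lam P = M at h
  induction h with
  | omega => exact .inl trivial
  | lam h => cases hM; exact .inr ⟨_, _, rfl, h⟩
  | @sub _ _ μ' ν' _ hs ih =>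
    rcases ih hM with h | ⟨σ, ν, rfl, hP⟩
    · exact .inl (h.of_subTy hs)
    cases ν' with
    | tvar => cases isComp_strict_iff.1 (subTy_strict_iff.1 hs)
    | omega => exact .inl trivial
    | arrow τ' ν' =>
      rcases subTy_strict_iff.1 hs with h | ⟨_, _, hc, hτ, hq⟩
      · exact .inl h
      cases isComp_strict_iff.1 hc
      exact .inr ⟨τ', ν', rfl, .sub (hP.mono_ctx ((CtxLe.refl _).cons hτ)) hq.subTy⟩
  | var | app => cases hM

theorem app_inv {A B : Tm} {μ : STy} (h : Der Γ (.app A B) μ) :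
    μ.IsTrivial ∨ ∃ σ, Der Γ A (.arrow σ μ) ∧ ∀ ν, IsComp ν σ → Der Γ B ν := by
  generalize hM : Tm.app A B = M at h
  induction h with
  | omega => exact .inl trivial
  | app hA hB => cases hM; exact .inr ⟨_, hA, hB⟩
  | sub _ hs ih =>
    rcases ih hM with h | ⟨σ, hA, hB⟩
    · exact .inl (h.of_subTy hs)
    · exact .inr ⟨σ, .sub hA (.arrow (.refl σ) hs), hB⟩
  | var | lam => cases hM

theorem lift {Γ₁ Γ₂ : List ITy} {M : Tm} {μ : STy} (h : Der (Γ₁ ++ Γ₂) M μ) (τ : ITy) :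
    Der (Γ₁ ++ τ :: Γ₂) (M.lift Γ₁.length) μ := by
  generalize hΓ : Γ₁ ++ Γ₂ = Γ at h
  induction h generalizing Γ₁ with
  | @var _ n _ _ hn hc =>
    subst hΓ
    simp only [Tm.lift]
    split_ifs with h
    · exact .var (by rwa [List.getElem?_append_left h] at hn ⊢) hc
    · exact .var (by rwa [List.getElem?_append_cons_of_le _ _ _ (by omega)]) hc
  | omega => exact .omega _ _
  | sub _ hs ih => exact .sub (ih hΓ) hs
  | @lam _ _ σ _ _ ih => subst hΓ; exact .lam (ih (Γ₁ := σ :: Γ₁) rfl)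
  | app _ _ ihM ihN => exact .app (ihM hΓ) fun ν hν => ihN ν hν hΓ

theorem subst {Γ₁ Γ₂ : List ITy} {σ : ITy} {M N : Tm} {μ : STy} (h : Der (Γ₁ ++ σ :: Γ₂) M μ)
    (hN : ∀ ν, IsComp ν σ → Der (Γ₁ ++ Γ₂) N ν) : Der (Γ₁ ++ Γ₂) (M.subst Γ₁.length N) μ := by
  generalize hΓ : Γ₁ ++ σ :: Γ₂ = Γ at h
  induction h generalizing Γ₁ N with
  | @var _ n _ _ hn hc =>
    subst hΓ
    simp only [Tm.subst]
    split_ifs with h₁ h₂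
    · exact .var (by rwa [List.getElem?_append_left h₁] at hn ⊢) hc
    · subst h₂
      rw [List.getElem?_append_right le_rfl, Nat.sub_self, List.getElem?_cons_zero] at hn
      cases hn
      exact hN _ hc
    · obtain ⟨n, rfl⟩ : ∃ m, n = m + 1 := ⟨n - 1, by omega⟩
      rw [List.getElem?_append_cons_of_le _ _ _ (by omega)] at hn
      exact .var hn hc
  | omega => exact .omega _ _
  | sub _ hs ih => exact .sub (ih hN hΓ) hs
  | @lam _ _ τ _ _ ih =>
    subst hΓ
    exact .lam (ih (Γ₁ := τ :: Γ₁) (fun ν hν => (hN ν hν).lift (Γ₁ := []) τ) rfl)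
  | app _ _ ihM ihN => exact .app (ihM hN hΓ) fun ν hν => ihN ν hν hN hΓ

theorem step {Γ : List ITy} {M M' : Tm} {μ : STy} (h : Der Γ M μ) (hs : Tm.Step M M') :
    Der Γ M' μ := by
  induction hs generalizing Γ μ with
  | beta P Q =>
    rcases h.app_inv with h | ⟨σ, hA, hB⟩
    · exact of_isTrivial h
    rcases hA.lam_inv with h | ⟨_, _, he, hP⟩
    · exact of_isTrivial h
    cases he
    exact hP.subst (Γ₁ := []) hB
  | botApp =>
    rcases h.app_inv with h | ⟨σ, hA, -⟩
    · exact of_isTrivial h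
    · exact of_isTrivial hA.bot_inv
  | botLam =>
    rcases h.lam_inv with h | ⟨_, _, rfl, hP⟩
    · exact of_isTrivial h
    · exact of_isTrivial hP.bot_inv
  | appL _ _ ih =>
    rcases h.app_inv with h | ⟨σ, hA, hB⟩
    · exact of_isTrivial h
    · exact .app (ih hA) hB
  | appR _ _ ih =>
    rcases h.app_inv with h | ⟨σ, hA, hB⟩
    · exact of_isTrivial h
    · exact .app hA fun ν hν => ih (hB ν hν)
  | lamC _ ih =>
    rcases h.lam_inv with h | ⟨_, _, rfl, hP⟩
    · exact of_isTrivial h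
    · exact .lam (ih hP)

theorem red {Γ : List ITy} {M M' : Tm} {μ : STy} (h : Der Γ M μ) (hs : Tm.Red M M') :
    Der Γ M' μ := by
  induction hs with
  | refl => exact h
  | tail _ hs ih => exact ih.step hs

end Der

/-! ### Typable terms are head normalizing -/

namespace Tm

def scons (N : Tm) (s : ℕ → Tm) : ℕ → Tm
  | 0 => N
  | n + 1 => s n

def up (s : ℕ → Tm) : ℕ → Tm := scons (var 0) fun n => lift (s n) 0

def msubst : Tm → (ℕ → Tm) → Tm
  | var n, s => s n
  | bot, _ => bot
  | lam M, s => lam (msubst M (up s))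
  | app M N, s => app (msubst M s) (msubst N s)

@[simp]
theorem msubst_var (M : Tm) : msubst M var = M := by
  have up_var : up var = var := funext fun n => by cases n <;> rfl
  induction M with
  | var | bot => rfl
  | lam M ih => simp only [msubst, up_var, ih]
  | app M N ihM ihN => simp only [msubst, ihM, ihN]

theorem up_succ (s : ℕ → Tm) (n : ℕ) : up s (n + 1) = lift (s n) 0 := rfl

theorem subst_msubst_up_iterate (M N : Tm) (s : ℕ → Tm) (k : ℕ) :
    subst (msubst M (up^[k] (up s))) k ((lift · 0)^[k] N) = msubst M (up^[k] (scons N s)) := by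
  induction M generalizing k with
  | var n =>
    induction k generalizing n with
    | zero => cases n with
      | zero => rfl
      | succ n => exact subst_lift _ _ _
    | succ k ih =>
      simp only [Function.iterate_succ_apply', msubst] at ih ⊢
      cases n with
      | zero => rfl
      | succ n => rw [up_succ, up_succ, ← lift_subst_of_le _ _ (Nat.zero_le k), ih]
  | bot => rfl
  | lam M ih =>
    have := ih (k + 1)
    simp only [Function.iterate_succ_apply'] at this
    simp only [msubst, subst, this]
  | app M P ihM ihP => simp only [msubst, subst, ihM, ihP]

theorem subst_msubst_up (M N : Tm) (s : ℕ → Tm) :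
    subst (msubst M (up s)) 0 N = msubst M (scons N s) :=
  subst_msubst_up_iterate M N s 0

end Tm

open Tm

/-- Tait's reducibility predicate for head normalization. -/
def Reducible : STy → Tm → Prop
  | .omega, _ => True
  | .tvar _, M => HasHnf M
  | .arrow σ μ, M => ∀ N, (∀ ν, IsComp ν σ → Reducible ν N) → Reducible μ (app M N)
termination_by μ => sizeOf μ
decreasing_by
  · have := sizeOf_lt_of_isComp ‹IsComp ν σ›
    simp only [STy.arrow.sizeOf_spec]; omega
  · simp only [STy.arrow.sizeOf_spec]; omega

namespace Reducible

theorem tvar_iff {n : ℕ} {M : Tm} : Reducible (.tvar n) M ↔ HasHnf M := by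
  rw [Reducible]

theorem arrow_iff {σ : ITy} {μ : STy} {M : Tm} :
    Reducible (.arrow σ μ) M ↔ ∀ N, (∀ ν, IsComp ν σ → Reducible ν N) → Reducible μ (app M N) := by
  rw [Reducible]

theorem of_isTrivial {μ : STy} (h : μ.IsTrivial) (M : Tm) : Reducible μ M := by
  induction μ using STy.arrow_induction generalizing M with
  | tvar => cases h
  | omega => rw [Reducible]; trivial
  | arrow σ μ ih => exact arrow_iff.2 fun N _ => ih h _

theorem of_neutral (μ : STy) {M : Tm} (h : Neutral M) : Reducible μ M := by
  induction μ using STy.arrow_induction generalizing M with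
  | tvar => exact tvar_iff.2 ⟨M, .refl, .neutral h⟩
  | omega => exact of_isTrivial isTrivial_omega M
  | arrow σ μ ih => exact arrow_iff.2 fun N _ => ih (h.app N)

theorem iff_of_hRed {μ : STy} {M M' : Tm} (h : HRed M M') : Reducible μ M ↔ Reducible μ M' := by
  induction μ using STy.arrow_induction generalizing M M' with
  | tvar => rw [tvar_iff, tvar_iff, hasHnf_iff_of_hRed h]
  | omega => exact iff_of_true (of_isTrivial isTrivial_omega _) (of_isTrivial isTrivial_omega _)
  | arrow σ μ ih =>
    have app_iff : ∀ N, Reducible μ (app M N) ↔ Reducible μ (app M' N) := by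
      induction h with
      | refl => exact fun _ => .rfl
      | tail _ hs ih' =>
        intro N
        obtain ⟨Z, hZ, hZ'⟩ := hs.app_join N
        exact (ih' N).trans ((ih hZ).trans (ih hZ').symm)
    simp only [arrow_iff, app_iff]

theorem of_algSub {σ : ITy} {μ : STy} {M : Tm} (h : AlgSub σ μ)
    (hM : ∀ ν, IsComp ν σ → Reducible ν M) : Reducible μ M := by
  induction hn : sizeOf σ + sizeOf μ using Nat.strong_induction_on generalizing σ μ M with
  | _ n ih =>
  subst hn
  cases μ with
  | omega => exact of_isTrivial isTrivial_omega M
  | tvar => exact hM _ h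
  | arrow τ μ =>
    rcases h with h | ⟨τ', μ', hc, hs, hq⟩
    · exact of_isTrivial (μ := .arrow τ μ) h M
    have hμ' := sizeOf_lt_of_isComp hc
    simp only [STy.arrow.sizeOf_spec] at hμ'
    refine arrow_iff.2 fun N hN => ih _ ?_ hq (forall_isComp_strict.2 ?_) rfl
    · simp only [STy.arrow.sizeOf_spec, ITy.strict.sizeOf_spec]; omega
    refine arrow_iff.1 (hM _ hc) N fun ν hν => ih _ ?_ (hs.algSub hν) hN rfl
    have := sizeOf_lt_of_isComp hν
    simp only [STy.arrow.sizeOf_spec]; omega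

theorem hasHnf {μ : STy} {M : Tm} (h : Reducible μ M) (hμ : ¬ μ.IsTrivial) : HasHnf M := by
  induction μ using STy.arrow_induction generalizing M with
  | tvar => exact tvar_iff.1 h
  | omega => exact absurd trivial hμ
  | arrow σ μ ih =>
    exact (ih (arrow_iff.1 h (var 0) fun ν _ => of_neutral ν (.var 0)) hμ).of_app

end Reducible

theorem Der.reducible_msubst {Γ : List ITy} {M : Tm} {μ : STy} (h : Der Γ M μ) {s : ℕ → Tm}
    (hs : ∀ n σ, Γ[n]? = some σ → ∀ ν, IsComp ν σ → Reducible ν (s n)) :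
    Reducible μ (msubst M s) := by
  induction h generalizing s with
  | @var _ n _ _ hn hc => exact hs n _ hn _ hc
  | omega => exact .of_isTrivial isTrivial_omega _
  | sub _ hsub ih => exact .of_algSub (subTy_strict_iff.1 hsub) (forall_isComp_strict.2 (ih hs))
  | lam _ ih =>
    refine Reducible.arrow_iff.2 fun N hN => (Reducible.iff_of_hRed (.single (.beta _ N))).2 ?_
    rw [subst_msubst_up]
    refine ih fun n σ hn => ?_
    cases n with
    | zero => cases hn; exact hN
    | succ n => exact hs n σ hn
  | app _ _ ihM ihN => exact Reducible.arrow_iff.1 (ihM hs) _ fun ν hν => ihN ν hν hs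

theorem Der.hasHnf {Γ : List ITy} {M : Tm} {μ : STy} (h : Der Γ M μ) (hμ : ¬ μ.IsTrivial) :
    HasHnf M := by
  simpa using (h.reducible_msubst fun n _ _ ν _ => .of_neutral ν (.var n)).hasHnf hμ

/-! ### Retractions -/

theorem List.Forall₂.of_forall₂_left {α β γ : Type*} {R : α → β → Prop} {S : α → γ → Prop}
    {T : β → γ → Prop} (hRST : ∀ a b c, R a b → S a c → T b c) :
    ∀ {l₁ : List α} {l₂ : List β} {l₃ : List γ}, Forall₂ R l₁ l₂ → Forall₂ S l₁ l₃ → Forall₂ T l₂ l₃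
  | _, _, _, .nil, .nil => .nil
  | _, _, _, .cons hR hR', .cons hS hS' => .cons (hRST _ _ _ hR hS) (of_forall₂_left hRST hR' hS')

namespace Tm

theorem red_of_conv_comp {L R : Tm} (h : Conv (comp L R) iTm) :
    Red (app (lift L 0) (app (lift R 0) (var 0))) (var 0) := by
  obtain ⟨P, hLR, hI⟩ := h
  obtain rfl : P = iTm := by
    rcases Relation.ReflTransGen.cases_head hI with h | ⟨_, hs, _⟩
    · exact h.symm
    · cases hs with | lamC hs => cases hs
  rcases red_lam_inv hLR with ⟨_, he, hred⟩ | he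
  · cases he; exact hred
  · cases he

end Tm

namespace Der

theorem applist_inv {Γ : List ITy} {M : Tm} {As : List Tm} {μ : STy} (h : Der Γ (M.applist As) μ)
    (hμ : ¬ μ.IsTrivial) : ∃ πs, Der Γ M (arrows πs μ) ∧
      List.Forall₂ (fun π A => ∀ ν, IsComp ν π → Der Γ A ν) πs As := by
  induction As using List.reverseRecOn generalizing μ with
  | nil => exact ⟨[], h, .nil⟩
  | append_singleton As A ih =>
    rw [Tm.applist_concat] at h
    rcases h.app_inv with h | ⟨σ, hM, hA⟩
    · exact absurd h hμ
    obtain ⟨πs, hM, hAs⟩ := ih hM hμ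
    refine ⟨πs ++ [σ], ?_, List.rel_append hAs (.cons hA .nil)⟩
    simpa [arrows, List.foldr_append] using hM

theorem applist {Γ : List ITy} {M : Tm} {As : List Tm} {ρs : List ITy} {μ : STy}
    (hM : Der Γ M (arrows ρs μ))
    (hAs : List.Forall₂ (fun ρ A => ∀ ν, IsComp ν ρ → Der Γ A ν) ρs As) :
    Der Γ (M.applist As) μ := by
  induction hAs generalizing M with
  | nil => exact hM
  | cons hA _ ih => exact ih (.app hM hA)

end Der

theorem AlgSub.exists_arrows {πs : List ITy} {μ ν : STy} (h : AlgSub (.strict ν) (arrows πs μ))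
    (hμ : ¬ μ.IsTrivial) :
    ∃ ρs c, ν = arrows ρs c ∧ List.Forall₂ SubTy πs ρs ∧ AlgSub (.strict c) μ := by
  induction πs generalizing ν with
  | nil => exact ⟨[], ν, rfl, .nil, h⟩
  | cons π πs ih =>
    rcases h with h | ⟨ρ, ν', hc, hπ, hν'⟩
    · exact absurd ((isTrivial_arrows πs μ).1 h) hμ
    cases isComp_strict_iff.1 hc
    obtain ⟨ρs, c, rfl, hπs, hc⟩ := ih hν'
    exact ⟨ρ :: ρs, c, rfl, .cons hπ hπs, hc⟩

namespace Retract

variable {μ ν : STy}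

theorem exists_arrows (h : Retract μ ν) (hμ : ¬ μ.IsTrivial) :
    ∃ ρs c, ν = arrows ρs c ∧ EqvTy (.strict c) (.strict μ) := by
  obtain ⟨L, R, hL, hR, hLR⟩ := h
  -- In the context `x : μ`, `B` is `R x` and `M` is `L y` for a fresh `y : ν`.
  set B := Tm.app (R.lift 0) (.var 0)
  set M := Tm.app ((L.lift 0).lift 0) (.var 0)
  have hB : Der [.strict μ] B ν :=
    .app (hR.lift (Γ₁ := []) _) (forall_isComp_strict.2 (.var rfl (.strict μ)))
  have hM : Der [.strict ν, .strict μ] M μ :=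
    .app ((hL.lift (Γ₁ := []) _).lift (Γ₁ := []) _) (forall_isComp_strict.2 (.var rfl (.strict ν)))
  have hMB : Der [.strict μ] (M.subst 0 B) μ := hM.subst (Γ₁ := []) (forall_isComp_strict.2 hB)
  have hred : Tm.HRed (M.subst 0 B) (.var 0) := by
    refine (hMB.hasHnf hμ).hRed_of_red_var ?_
    simpa [M, B, Tm.subst] using Tm.red_of_conv_comp hLR
  have hM1 : Tm.NotFree 1 M := And.intro ((Tm.notFree_lift_self L 0).lift le_rfl) zero_ne_one
  obtain ⟨As, hMAs, hBAs⟩ := Tm.exists_red_applist_of_hRed_subst hM1 hred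
  obtain ⟨πs, hy, hAs⟩ := (hM.red hMAs).applist_inv hμ
  have hνπs : AlgSub (.strict ν) (arrows πs μ) := by
    rcases hy.var_inv with h | ⟨σ, hσ, hq⟩
    · exact absurd ((isTrivial_arrows πs μ).1 h) hμ
    · cases hσ; exact hq
  obtain ⟨ρs, c, rfl, hπρ, hc⟩ := hνπs.exists_arrows hμ
  refine ⟨ρs, c, rfl, hc.subTy, ?_⟩
  have hBAs' : Der [.strict μ] (B.applist (As.map (Tm.subst · 0 B))) c := by
    refine hB.applist (List.forall₂_map_right_iff.2 (hπρ.of_forall₂_left ?_ hAs))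
    exact fun π ρ A hπρ hA ν hν =>
      .of_algSub (hπρ.algSub hν) fun ν' hν' =>
        (hA ν' hν').subst (Γ₁ := []) (forall_isComp_strict.2 hB)
  rcases (hBAs'.red hBAs.red).var_inv with h | ⟨σ, hσ, hq⟩
  · exact h.subTy _
  · cases hσ; exact hq.subTy

theorem not_isTrivial (h : Retract μ ν) (hμ : ¬ μ.IsTrivial) : ¬ ν.IsTrivial := by
  obtain ⟨ρs, c, rfl, hc⟩ := h.exists_arrows hμ
  exact fun hν => hμ (((isTrivial_arrows ρs c).1 hν).of_subTy hc.1)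

theorem arity_le (h : Retract μ ν) (hμ : ¬ μ.IsTrivial) : μ.arity ≤ ν.arity := by
  obtain ⟨ρs, c, rfl, hc⟩ := h.exists_arrows hμ
  rw [arity_arrows, arity_eq_of_algSub (subTy_strict_iff.1 hc.2) (subTy_strict_iff.1 hc.1) hμ]
  omega

theorem eqvTy_of_arity_le (h : Retract μ ν) (hμ : ¬ μ.IsTrivial) (hle : ν.arity ≤ μ.arity) :
    EqvTy (.strict μ) (.strict ν) := by
  obtain ⟨ρs, c, rfl, hc⟩ := h.exists_arrows hμ
  have := arity_eq_of_algSub (subTy_strict_iff.1 hc.2) (subTy_strict_iff.1 hc.1) hμ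
  obtain rfl : ρs = [] := List.eq_nil_of_length_eq_zero (by rw [arity_arrows] at hle; omega)
  exact ⟨hc.2, hc.1⟩

end Retract

/-- mutual retraction implies equivalence. -/
theorem retract_antisymm {μ ν : STy} (h₁ : Retract μ ν) (h₂ : Retract ν μ) :
    EqvTy (.strict μ) (.strict ν) := by
  by_cases hμ : μ.IsTrivial
  · have hν : ν.IsTrivial := by_contra fun hν => h₂.not_isTrivial hν hμ
    exact ⟨hν.subTy _, hμ.subTy _⟩
  · have hν := h₁.not_isTrivial hμ
    exact h₁.eqvTy_of_arity_le hμ (h₂.arity_le hν)
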